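/- Let c_{lw} be nonnegative integers indexed by pairs (l,w) with l a positive integer and w ranging over a set of size at most 2^k, such that ∑_{l,w} c_{lw} = c and ∑_{l,w} l·c_{lw} = t with t ≥ c ≥ 1. Then ∑_{l,w} c_{lw}·log₂(c / c_{lw}) ≤ k·c + (t+c)·log₂(1 + c/t) + c·log₂(t/c). -/

import Mathlib

/-!
By Gibbs' inequality, the empirical entropy `∑ cnt · log₂ (c / cnt)` is at most the cross entropy
`∑ cnt · (-log₂ Q)` against any sub-probability weights `Q`. Take `Q (l, w) = x (1 + x)⁻ˡ / 2ᵏ`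
with `x = c / t`: geometric in the phrase length and uniform over the at most `2ᵏ` contexts.
Since `l ≥ 1`, its mass is at most `x ∑_{l ≥ 1} (1 + x)⁻ˡ = 1`, and since `∑ cnt = c` and
`∑ l · cnt = t`, the cross entropy is exactly `k c + c log₂ (t / c) + t log₂ (1 + c / t)`.
-/

open Finset Real

theorem Real.mul_log_div_le_mul_sub_sub_mul_log {n N q : ℝ} (hn : 0 ≤ n) (hnN : n ≤ N)
    (hq : 0 < q) : n * log (N / n) ≤ N * q - n - n * log q := by
  rcases hn.eq_or_lt with rfl | hn
  · simpa using mul_nonneg hnN hq.le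
  have hN : 0 < N := hn.trans_le hnN
  have hlog : log (N / n) = log (N * q / n) - log q := by
    rw [log_div hN.ne' hn.ne', log_div (by positivity) hn.ne', log_mul hN.ne' hq.ne']
    ring
  have hgibbs : n * log (N * q / n) ≤ N * q - n := by
    calc n * log (N * q / n) ≤ n * (N * q / n - 1) :=
          mul_le_mul_of_nonneg_left (log_le_sub_one_of_pos (by positivity)) hn.le
      _ = N * q - n := by field_simp
  rw [hlog, mul_sub]
  linarith

theorem Real.sum_mul_log_div_le_sum_mul_neg_log {ι : Type*} (s : Finset ι) (n q : ι → ℝ)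
    (hn : ∀ i ∈ s, 0 ≤ n i) (hq : ∀ i ∈ s, 0 < q i) (hqs : ∑ i ∈ s, q i ≤ 1) :
    ∑ i ∈ s, n i * log ((∑ j ∈ s, n j) / n i) ≤ ∑ i ∈ s, n i * -log (q i) := by
  set N := ∑ j ∈ s, n j
  have hN : 0 ≤ N := sum_nonneg hn
  calc ∑ i ∈ s, n i * log (N / n i) ≤ ∑ i ∈ s, (N * q i - n i - n i * log (q i)) :=
        sum_le_sum fun i hi =>
          mul_log_div_le_mul_sub_sub_mul_log (hn i hi) (single_le_sum hn hi) (hq i hi)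
    _ = N * (∑ i ∈ s, q i - 1) + ∑ i ∈ s, n i * -log (q i) := by
        simp only [sum_sub_distrib, ← mul_sum, mul_neg, sum_neg_distrib]
        ring
    _ ≤ ∑ i ∈ s, n i * -log (q i) := by
        linarith [mul_nonpos_of_nonneg_of_nonpos hN (sub_nonpos.2 hqs)]

theorem Real.sum_mul_logb_div_le_sum_mul_neg_logb {ι : Type*} {b : ℝ} (hb : 1 < b)
    (s : Finset ι) (n q : ι → ℝ) (hn : ∀ i ∈ s, 0 ≤ n i) (hq : ∀ i ∈ s, 0 < q i)
    (hqs : ∑ i ∈ s, q i ≤ 1) :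
    ∑ i ∈ s, n i * logb b ((∑ j ∈ s, n j) / n i) ≤ ∑ i ∈ s, n i * -logb b (q i) := by
  simp only [logb, ← neg_div, ← mul_div_assoc, ← sum_div]
  exact div_le_div_of_nonneg_right (sum_mul_log_div_le_sum_mul_neg_log s n q hn hq hqs)
    (log_pos hb).le

theorem sum_pow_le_div_one_sub_of_zero_notMem {r : ℝ} (hr₀ : 0 ≤ r) (hr₁ : r < 1)
    {L : Finset ℕ} (hL : 0 ∉ L) : ∑ l ∈ L, r ^ l ≤ r / (1 - r) := by
  have hsub : L ⊆ Ico 1 (L.sup id + 1) := fun l hl => by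
    have : l ≠ 0 := fun h => hL (h ▸ hl)
    have : l ≤ L.sup id := le_sup (f := id) hl
    simp only [mem_Ico]
    omega
  calc ∑ l ∈ L, r ^ l ≤ ∑ l ∈ Ico 1 (L.sup id + 1), r ^ l :=
        sum_le_sum_of_subset_of_nonneg hsub fun l _ _ => pow_nonneg hr₀ l
    _ ≤ r / (1 - r) := by simpa using geom_sum_Ico_le_of_lt_one (m := 1) hr₀ hr₁

theorem sum_fst_le_card_mul_sum_image_fst {α W : Type*} [Fintype W] [DecidableEq α]
    (S : Finset (α × W)) {f : α → ℝ} (hf : ∀ a, 0 ≤ f a) :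
    ∑ q ∈ S, f q.1 ≤ Fintype.card W * ∑ a ∈ S.image Prod.fst, f a := by
  have hsub : S ⊆ S.image Prod.fst ×ˢ univ := fun q hq =>
    mem_product.2 ⟨mem_image_of_mem _ hq, mem_univ _⟩
  calc ∑ q ∈ S, f q.1 ≤ ∑ q ∈ S.image Prod.fst ×ˢ univ, f q.1 :=
        sum_le_sum_of_subset_of_nonneg hsub fun q _ _ => hf q.1
    _ = Fintype.card W * ∑ a ∈ S.image Prod.fst, f a := by
        simp [sum_product, mul_sum, mul_comm]

noncomputable def geomWeight (k : ℕ) (x : ℝ) (l : ℕ) : ℝ := x * (1 + x)⁻¹ ^ l / 2 ^ k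

theorem geomWeight_pos {x : ℝ} (hx : 0 < x) (k l : ℕ) : 0 < geomWeight k x l := by
  unfold geomWeight
  positivity

theorem sum_geomWeight_le_one {W : Type*} [Fintype W] {k : ℕ} (hW : Fintype.card W ≤ 2 ^ k)
    {S : Finset (ℕ × W)} (hl : ∀ q ∈ S, 1 ≤ q.1) {x : ℝ} (hx : 0 < x) :
    ∑ q ∈ S, geomWeight k x q.1 ≤ 1 := by
  set r := (1 + x)⁻¹
  have hr₀ : 0 ≤ r := by positivity
  have hr₁ : r < 1 := inv_lt_one_of_one_lt₀ (by linarith)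
  have hr : x * (r / (1 - r)) = 1 := by
    simp only [r]
    field_simp
    rw [add_sub_cancel_left, div_self hx.ne']
  have h0 : 0 ∉ S.image Prod.fst := by
    simp only [mem_image, not_exists, not_and]
    intro q hq h
    have := hl q hq
    omega
  have hgeom := sum_pow_le_div_one_sub_of_zero_notMem hr₀ hr₁ h0
  calc ∑ q ∈ S, geomWeight k x q.1
      ≤ Fintype.card W * ∑ l ∈ S.image Prod.fst, geomWeight k x l :=
        sum_fst_le_card_mul_sum_image_fst S fun l => (geomWeight_pos hx k l).le
    _ = Fintype.card W / 2 ^ k * (x * ∑ l ∈ S.image Prod.fst, r ^ l) := by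
        simp only [geomWeight, ← sum_div, ← mul_sum]
        ring
    _ ≤ 1 * (x * (r / (1 - r))) := by
        gcongr
        rw [div_le_one (by positivity)]
        exact_mod_cast hW
    _ = 1 := by rw [hr, one_mul]

theorem neg_logb_geomWeight {x : ℝ} (hx : 0 < x) (k l : ℕ) :
    -logb 2 (geomWeight k x l) = k + logb 2 x⁻¹ + l * logb 2 (1 + x) := by
  rw [geomWeight, logb_div (by positivity) (by positivity), logb_mul hx.ne' (by positivity),
    logb_pow, logb_pow, logb_inv, logb_inv, logb_self_eq_one one_lt_two]
  ring

open Finset in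
theorem stmt6_general {W : Type*} [Fintype W] (k : ℕ) (hW : Fintype.card W ≤ 2 ^ k)
    (S : Finset (ℕ × W)) (cnt : ℕ × W → ℕ)
    (hl : ∀ q ∈ S, 1 ≤ q.1)
    (c t : ℕ) (hc : 1 ≤ c) (hct : c ≤ t)
    (hsum : ∑ q ∈ S, cnt q = c)
    (hwsum : ∑ q ∈ S, q.1 * cnt q = t) :
    ∑ q ∈ S, (cnt q : ℝ) * Real.logb 2 ((c : ℝ) / (cnt q : ℝ)) ≤
      (k : ℝ) * c + ((t : ℝ) + c) * Real.logb 2 (1 + (c : ℝ) / t) +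
        (c : ℝ) * Real.logb 2 ((t : ℝ) / c) := by
  have hc₀ : (0 : ℝ) < c := by exact_mod_cast hc
  have hx : (0 : ℝ) < c / t := div_pos hc₀ (by exact_mod_cast hc.trans hct)
  have hsum' : ∑ q ∈ S, (cnt q : ℝ) = c := by exact_mod_cast hsum
  have hwsum' : ∑ q ∈ S, (q.1 : ℝ) * cnt q = t := by exact_mod_cast hwsum
  have hgibbs := sum_mul_logb_div_le_sum_mul_neg_logb one_lt_two S (fun q => (cnt q : ℝ))
    (fun q => geomWeight k (c / t) q.1) (fun q _ => Nat.cast_nonneg _)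
    (fun q _ => geomWeight_pos hx k q.1) (sum_geomWeight_le_one hW hl hx)
  have hcross := calc
    ∑ q ∈ S, (cnt q : ℝ) * -logb 2 (geomWeight k (c / t) q.1)
      = ∑ q ∈ S, ((k + logb 2 (t / c)) * cnt q + logb 2 (1 + c / t) * (q.1 * cnt q)) :=
        sum_congr rfl fun q _ => by rw [neg_logb_geomWeight hx, inv_div]; ring
    _ = k * c + c * logb 2 (t / c) + t * logb 2 (1 + c / t) := by
        rw [sum_add_distrib, ← mul_sum, ← mul_sum, hsum', hwsum']
        ring
  have hlog_nonneg : 0 ≤ logb 2 (1 + c / t) := logb_nonneg one_lt_two (by linarith)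
  rw [hsum', hcross] at hgibbs
  linarith [mul_nonneg hc₀.le hlog_nonneg]

open Finset in
/-- Lemma 2 of the paper.  Nonnegative integer counts `cnt (l, w)`, supported on
a finite set `S` of pairs with `l ≥ 1` and `w` in a set of size at most `2^k`,
with `∑ cnt = c` and `∑ l·cnt = t`, `t ≥ c ≥ 1`, satisfy
`∑ cnt_{lw}·log₂(c/cnt_{lw}) ≤ k·c + (t+c)·log₂(1+c/t) + c·log₂(t/c)`.
(Terms with `cnt = 0` vanish since `c/0 = 0` and `log₂ 0 = 0` in Mathlib.) -/
theorem stmt6 {W : Type*} [Fintype W] (k : ℕ) (hW : Fintype.card W ≤ 2 ^ k)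
    (S : Finset (ℕ × W)) (cnt : ℕ × W → ℕ)
    (hl : ∀ q ∈ S, 1 ≤ q.1)
    (hsupp : ∀ q ∉ S, cnt q = 0)
    (c t : ℕ) (hc : 1 ≤ c) (hct : c ≤ t)
    (hsum : ∑ q ∈ S, cnt q = c)
    (hwsum : ∑ q ∈ S, q.1 * cnt q = t) :
    ∑ q ∈ S, (cnt q : ℝ) * Real.logb 2 ((c : ℝ) / (cnt q : ℝ)) ≤
      (k : ℝ) * c + ((t : ℝ) + c) * Real.logb 2 (1 + (c : ℝ) / t) +
        (c : ℝ) * Real.logb 2 ((t : ℝ) / c) :=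
  stmt6_general k hW S cnt hl c t hc hct hsum hwsum
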